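/- arXiv:2307.02638 — 3 statements merged into one kernel-verified Lean document; each statement's English description precedes it below -/
import Mathlib

section
/- Let K be a field of characteristic zero and let f_{m,n} ∈ K (m, n ≥ 0) with f_{0,0} = 0 and f_{0,1} ≠ 0. Let φ_n = Σ_{m≥0} f_{m,n} x^m/m! ∈ K[[x]], let g = Σ_{n≥1} φ_n Y^n/n! ∈ K[[x]][[Y]], and let ḡ be the (unique) compositional inverse of g. Let y ∈ K[[x]] be the unique power series with zero constant term satisfying F(x, y(x)) = 0, where F = Σ_{m,n≥0} f_{m,n} x^m y^n/(m! n!). Then y = ḡ(−φ_0), i.e., y equals the substitution of the power series −φ_0 (which has zero constant term) into ḡ. -/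
open PowerSeries

/-- First entry of a tuple (`0` if the tuple is empty). -/
def firstEntry {k : ℕ} (r : Fin k → ℕ) : ℕ := if h : 0 < k then r ⟨0, h⟩ else 0

/-- The partial Bell polynomial `B_{n,k}` evaluated at `x 1, x 2, …, x (n-k+1)` over a
`ℚ`-algebra; it vanishes when `n < k`. -/
noncomputable def bellPoly {R : Type*} [CommRing R] [Algebra ℚ R] (n k : ℕ) (x : ℕ → R) : R :=
  ∑ r ∈ Finset.filter
      (fun r : Fin n → ℕ => (∑ i, r i) = k ∧ (∑ i, (i.1 + 1) * r i) = n)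
      (Fintype.piFinset fun _ : Fin n => Finset.range (n + 1)),
    algebraMap ℚ R ((n.factorial : ℚ) /
        ∏ i : Fin n, ((r i).factorial * ((i.1 + 1).factorial : ℚ) ^ (r i))) *
      ∏ i : Fin n, x (i.1 + 1) ^ (r i)

/-- Composition `g ∘ h` of formal power series (the usual substitution of `h` into `g`,
intended for `h` with zero constant term). -/
noncomputable def psComp {R : Type*} [CommSemiring R] (g h : PowerSeries R) : PowerSeries R :=
  PowerSeries.mk fun n => ∑ k ∈ Finset.range (n + 1),
    PowerSeries.coeff k g * PowerSeries.coeff n (h ^ k)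

/-- Evaluation of `G ∈ K[[x]][[Y]]` at `a ∈ K[[x]]` (the usual substitution, intended for `a`
with zero constant term). -/
noncomputable def psEval {K : Type*} [CommSemiring K] (G : PowerSeries (PowerSeries K))
    (a : PowerSeries K) : PowerSeries K :=
  PowerSeries.mk fun N => ∑ k ∈ Finset.range (N + 1),
    PowerSeries.coeff N (PowerSeries.coeff k G * a ^ k)

/-- Substituting `y ∈ K[[x]]` for the second variable of `F ∈ K[[x,y]]` (the usual
substitution of multivariate power series, intended for `y` with zero constant term). -/
noncomputable def substY {K : Type*} [CommSemiring K] (F : MvPowerSeries (Fin 2) K)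
    (y : PowerSeries K) : PowerSeries K :=
  PowerSeries.mk fun N => ∑ m ∈ Finset.range (N + 1), ∑ n ∈ Finset.range (N + 1),
    MvPowerSeries.coeff (Finsupp.single 0 m + Finsupp.single 1 n) F *
      PowerSeries.coeff (N - m) (y ^ n)

/-- `F = Σ_{m,n} f_{m,n} x^m y^n/(m! n!) ∈ K[[x,y]]`. -/
noncomputable def Fser {K : Type*} [Field K] (f : ℕ → ℕ → K) : MvPowerSeries (Fin 2) K :=
  fun s => (((s 0).factorial : K) * ((s 1).factorial : K))⁻¹ * f (s 0) (s 1)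

/-- `φ_n = Σ_{m≥0} f_{m,n} x^m/m! ∈ K[[x]]`. -/
noncomputable def phiSer {K : Type*} [Field K] (f : ℕ → ℕ → K) (n : ℕ) : PowerSeries K :=
  PowerSeries.mk fun m => ((m.factorial : K))⁻¹ * f m n

/-- `g = Σ_{n≥1} φ_n Y^n/n! ∈ K[[x]][[Y]]`. -/
noncomputable def gSer {K : Type*} [Field K] (f : ℕ → ℕ → K) : PowerSeries (PowerSeries K) :=
  PowerSeries.mk fun n => if n = 0 then 0 else
    PowerSeries.C ((n.factorial : K))⁻¹ * phiSer f n

/-!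
Substituting `y` into `F` splits off the `y`-free part: `F(x, y) = φ₀ + g(y)`. So `F(x, y) = 0`
says `g(y) = -φ₀`, and substituting this into `ḡ` gives `y = (ḡ ∘ g)(y) = ḡ(-φ₀)`.

Substitution of a series `a` with zero constant term is handled through truncations: modulo
`X ^ M`, `G(a)` only depends on `G` modulo `Y ^ M`, where it is polynomial evaluation. This makes
`G ↦ G(a)` a ring homomorphism compatible with composition.
-/

section Truncation

variable {R : Type*} [CommRing R]

lemma eq_of_forall_trunc_eq {u v : R⟦X⟧} (h : ∀ M, trunc M u = trunc M v) : u = v :=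
  ext fun N => by
    rw [← coeff_coe_trunc_of_lt (lt_add_one N), h, coeff_coe_trunc_of_lt (lt_add_one N)]

lemma trunc_eq_trunc_of_X_pow_dvd_sub {u v : R⟦X⟧} {M : ℕ} (h : X ^ M ∣ u - v) :
    trunc M u = trunc M v := by
  ext N
  rw [coeff_trunc, coeff_trunc]
  split_ifs with hN
  · rw [← sub_eq_zero, ← map_sub]
    exact X_pow_dvd_iff.1 h N hN
  · rfl

lemma trunc_eval_trunc_coe {a : R⟦X⟧} (ha : constantCoeff a = 0) (P : Polynomial R⟦X⟧)
    (M : ℕ) : trunc M ((trunc M (P : R⟦X⟧⟦X⟧)).eval a) = trunc M (P.eval a) := by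
  obtain ⟨S, hS⟩ : Polynomial.X ^ M ∣ trunc M (P : R⟦X⟧⟦X⟧) - P :=
    Polynomial.X_pow_dvd_iff.2 fun k hk => by
      rw [Polynomial.coeff_sub, coeff_trunc, if_pos hk, Polynomial.coeff_coe, sub_self]
  refine trunc_eq_trunc_of_X_pow_dvd_sub ?_
  rw [← Polynomial.eval_sub, hS, Polynomial.eval_mul, Polynomial.eval_pow, Polynomial.eval_X]
  exact (pow_dvd_pow_of_dvd (X_dvd_iff.2 ha) M).mul_right _

end Truncation

lemma trunc_psComp {S : Type*} [CommSemiring S] (G : S⟦X⟧) {H : S⟦X⟧}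
    (hH : constantCoeff H = 0) (M : ℕ) :
    trunc M (psComp G H) = trunc M ((trunc M G).eval₂ C H) := by
  ext k
  rw [coeff_trunc, coeff_trunc]
  split_ifs with hk
  · rw [psComp, coeff_mk, eval₂_trunc_eq_sum_range, map_sum]
    simp_rw [coeff_C_mul]
    refine Finset.sum_subset (Finset.range_subset_range.2 hk) fun j _ hj => ?_
    rw [X_pow_dvd_iff.1 (pow_dvd_pow_of_dvd (X_dvd_iff.2 hH) j) k
      (by simpa using hj), mul_zero]
  · rfl

section Substitution

variable {R : Type*} [CommRing R] {a : R⟦X⟧}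

lemma coeff_psEval (G : R⟦X⟧⟦X⟧) (N : ℕ) :
    coeff N (psEval G a) = coeff N ((trunc (N + 1) G).eval a) := by
  rw [psEval, coeff_mk, Polynomial.eval, eval₂_trunc_eq_sum_range, map_sum]
  rfl

lemma trunc_psEval (ha : constantCoeff a = 0) (G : R⟦X⟧⟦X⟧) (M : ℕ) :
    trunc M (psEval G a) = trunc M ((trunc M G).eval a) := by
  ext N
  rw [coeff_trunc, coeff_trunc]
  split_ifs with hN
  · rw [coeff_psEval, ← trunc_trunc_of_le G hN, ← coeff_coe_trunc_of_lt (lt_add_one N),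
      Nat.succ_eq_add_one, trunc_eval_trunc_coe ha, coeff_coe_trunc_of_lt (lt_add_one N)]
  · rfl

lemma psEval_C (c : R⟦X⟧) : psEval (C c) a = c := by
  ext N
  rw [coeff_psEval, trunc_C, Polynomial.eval_C]

lemma psEval_add (G G' : R⟦X⟧⟦X⟧) : psEval (G + G') a = psEval G a + psEval G' a := by
  ext N
  simp [psEval, add_mul, Finset.sum_add_distrib]

lemma psEval_mul (ha : constantCoeff a = 0) (G G' : R⟦X⟧⟦X⟧) :
    psEval (G * G') a = psEval G a * psEval G' a := by
  refine eq_of_forall_trunc_eq fun M => ?_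
  rw [← trunc_trunc_mul_trunc (psEval G a), trunc_psEval ha, trunc_psEval ha G,
    trunc_psEval ha G', trunc_trunc_mul_trunc, ← Polynomial.eval_mul,
    ← trunc_trunc_mul_trunc G, ← Polynomial.coe_mul, trunc_eval_trunc_coe ha]

lemma psEval_X (ha : constantCoeff a = 0) : psEval X a = a := by
  ext N
  have hN : N < N + 2 := by omega
  rw [← coeff_coe_trunc_of_lt hN, trunc_psEval ha, trunc_X, Polynomial.eval_X,
    coeff_coe_trunc_of_lt hN]

noncomputable def psEvalHom (ha : constantCoeff a = 0) : R⟦X⟧⟦X⟧ →+* R⟦X⟧ where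
  toFun G := psEval G a
  map_one' := by simpa using psEval_C (a := a) 1
  map_mul' := psEval_mul ha
  map_zero' := by simpa using psEval_C (a := a) 0
  map_add' := psEval_add

lemma psEval_eval₂ (ha : constantCoeff a = 0) (P : Polynomial R⟦X⟧) (H : R⟦X⟧⟦X⟧) :
    psEval (P.eval₂ C H) a = P.eval (psEval H a) := by
  have hC : (psEvalHom ha).comp C = RingHom.id R⟦X⟧ := RingHom.ext psEval_C
  exact (Polynomial.hom_eval₂ P C (psEvalHom ha) H).trans (by rw [hC]; rfl)

lemma constantCoeff_psEval (ha : constantCoeff a = 0) {H : R⟦X⟧⟦X⟧}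
    (hH : constantCoeff H = 0) : constantCoeff (psEval H a) = 0 := by
  obtain ⟨H', rfl⟩ := X_dvd_iff.2 hH
  rw [psEval_mul ha, psEval_X ha, map_mul, ha, zero_mul]

lemma psEval_psComp (ha : constantCoeff a = 0) (G : R⟦X⟧⟦X⟧) {H : R⟦X⟧⟦X⟧}
    (hH : constantCoeff H = 0) : psEval (psComp G H) a = psEval G (psEval H a) := by
  refine eq_of_forall_trunc_eq fun M => ?_
  rw [trunc_psEval ha, trunc_psComp G hH, ← trunc_psEval ha, psEval_eval₂ ha,
    trunc_psEval (constantCoeff_psEval ha hH)]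

end Substitution

lemma coeff_Fser {K : Type*} [Field K] (f : ℕ → ℕ → K) (m n : ℕ) :
    MvPowerSeries.coeff (Finsupp.single 0 m + Finsupp.single 1 n) (Fser f) =
      ((m.factorial : K) * (n.factorial : K))⁻¹ * f m n := by
  rw [MvPowerSeries.coeff_apply]
  simp [Fser]

lemma substY_Fser_eq {K : Type*} [Field K] (f : ℕ → ℕ → K) (y : PowerSeries K) :
    substY (Fser f) y = phiSer f 0 + psEval (gSer f) y := by
  ext N
  have hg0 : coeff N (coeff 0 (gSer f) * y ^ 0) = 0 := by simp [gSer]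
  rw [map_add, substY, psEval, coeff_mk, coeff_mk, Finset.sum_comm, Finset.sum_range_succ',
    Finset.sum_range_succ' (fun k => coeff N (coeff k (gSer f) * y ^ k)), hg0, add_zero,
    add_comm (coeff N (phiSer f 0))]
  congr 1
  · refine Finset.sum_congr rfl fun n _ => ?_
    rw [gSer, coeff_mk, if_neg n.succ_ne_zero, mul_assoc, coeff_C_mul, coeff_mul,
      Finset.Nat.sum_antidiagonal_eq_sum_range_succ_mk, Finset.mul_sum]
    refine Finset.sum_congr rfl fun m _ => ?_
    rw [coeff_Fser, phiSer, coeff_mk, mul_inv]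
    ring
  · rw [Finset.sum_range_succ, Finset.sum_eq_zero fun m hm => by
      rw [pow_zero, coeff_one, if_neg (Nat.sub_ne_zero_of_lt (Finset.mem_range.1 hm)), mul_zero]]
    rw [coeff_Fser, phiSer, coeff_mk, Nat.sub_self, pow_zero, coeff_zero_eq_constantCoeff, map_one]
    simp

theorem statement2_general {K : Type*} [Field K] (f : ℕ → ℕ → K)
    (gbar : PowerSeries (PowerSeries K))
    (hgbar2 : psComp gbar (gSer f) = PowerSeries.X)
    (y : PowerSeries K) (hy0 : PowerSeries.constantCoeff y = 0)
    (hy : substY (Fser f) y = 0) :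
    y = psEval gbar (-(phiSer f 0)) := by
  have hg : constantCoeff (gSer f) = 0 := by simp [gSer]
  have hgy : psEval (gSer f) y = -phiSer f 0 :=
    eq_neg_of_add_eq_zero_right ((substY_Fser_eq f y).symm.trans hy)
  calc y = psEval X y := (psEval_X hy0).symm
    _ = psEval (psComp gbar (gSer f)) y := by rw [hgbar2]
    _ = psEval gbar (psEval (gSer f) y) := psEval_psComp hy0 gbar hg
    _ = psEval gbar (-phiSer f 0) := by rw [hgy]

theorem statement2 {K : Type*} [Field K] [CharZero K] (f : ℕ → ℕ → K)
    (hf00 : f 0 0 = 0) (hf01 : f 0 1 ≠ 0)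
    (gbar : PowerSeries (PowerSeries K))
    (hgbar0 : PowerSeries.constantCoeff gbar = 0)
    (hgbar1 : psComp (gSer f) gbar = PowerSeries.X)
    (hgbar2 : psComp gbar (gSer f) = PowerSeries.X)
    (y : PowerSeries K) (hy0 : PowerSeries.constantCoeff y = 0)
    (hy : substY (Fser f) y = 0) :
    y = psEval gbar (-(phiSer f 0)) :=
  statement2_general f gbar hgbar2 y hy0 hy
end

section
/- Let R be a commutative ℚ-algebra and let h ∈ R[[Y]] be a formal power series with zero constant term whose linear coefficient is a unit of R. Write h_j = j!·(coefficient of Y^j in h), and let h̄ be the compositional inverse of h. Then for every n ≥ 1, the n-th Taylor coefficient of h̄ is given by n!·[Y^n] h̄ = h_1^{-(2n-1)} · Σ (−1)^{n−1−r_1} (2n−2−r_1)! / (r_2! ⋯ r_n! (2!)^{r_2} ⋯ (n!)^{r_n}) · h_1^{r_1} h_2^{r_2} ⋯ h_n^{r_n}, where the sum runs over all tuples (r_1, …, r_n) of nonnegative integers with r_1 + r_2 + ⋯ + r_n = n − 1 and r_1 + 2r_2 + ⋯ + n·r_n = 2n − 2. -/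
open PowerSeries

/-! Write `h = X * u` with `u` invertible and `v = u⁻¹`. Truncate `h̄ ∘ h = X` at order `n`,
differentiate, multiply by `vⁿ` and read off the coefficient of `Xⁿ⁻¹`: the summand coming from
`h̄ⱼ hʲ` contributes a multiple of `[Xᵖ] (v ^ (p + 1) * h')` with `p = n - j`, which is the residue
of `h' / h ^ (p + 1)`. It vanishes for `p ≥ 1`, where `h' / h ^ (p + 1)` is a derivative, and is
`1` for `p = 0`; this is Lagrange's formula `n [Xⁿ] h̄ = [Xⁿ⁻¹] vⁿ`.

Normalising `u = h₁ (1 + w)`, the negative binomial series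
`(1 + w) ^ (-n) = ∑ₖ (-1)ᵏ C(n - 1 + k, k) wᵏ` and the multinomial expansion of `wᵏ` give a sum
over pairs `(k, g)`. These are the tuples `r` of the statement, via `r₁ = n - 1 - k` and
`(r₂, …, rₙ) = g`, and `(n - 1)! C(n - 1 + k, k) * multinomial g = (2n - 2 - r₁)! / ∏ gⱼ!`. -/

open Finset

section PowerSeries

variable {R : Type*} [CommRing R]

lemma coeff_pow_eq_zero_of_lt {h : R⟦X⟧} (hh : constantCoeff h = 0) {j k : ℕ} (hjk : j < k) :
    coeff j (h ^ k) = 0 :=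
  X_pow_dvd_iff.mp (pow_dvd_pow_of_dvd (X_dvd_iff.mpr hh) k) j hjk

lemma X_pow_dvd_derivative {f : R⟦X⟧} {n : ℕ} (hf : X ^ (n + 1) ∣ f) : X ^ n ∣ d⁄dX R f := by
  rw [X_pow_dvd_iff] at hf ⊢
  intro m hm
  rw [coeff_derivative, hf (m + 1) (by omega), zero_mul]

lemma X_pow_dvd_psComp_sub_sum {h : R⟦X⟧} (hh : constantCoeff h = 0) (g : R⟦X⟧) (N : ℕ) :
    X ^ (N + 1) ∣ psComp g h - ∑ m ∈ range (N + 1), C (coeff m g) * h ^ m := by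
  refine X_pow_dvd_iff.mpr fun j hj => ?_
  rw [map_sub, sub_eq_zero, psComp, coeff_mk, map_sum]
  simp only [coeff_C_mul]
  refine sum_subset (range_subset_range.mpr (by omega)) fun m _ hm => ?_
  rw [coeff_pow_eq_zero_of_lt hh (by simpa using hm), mul_zero]

lemma derivative_eq_of_mul_eq_one {u v : R⟦X⟧} (huv : u * v = 1) :
    d⁄dX R v = -(v ^ 2 * d⁄dX R u) := by
  have h := congrArg (d⁄dX R) huv
  rw [Derivation.leibniz, Derivation.map_one_eq_zero, smul_eq_mul, smul_eq_mul] at h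
  linear_combination v * h - (d⁄dX R v) * huv

lemma coeff_pow_succ_of_one_add_mul_eq_one {w y : R⟦X⟧} (hw : constantCoeff w = 0)
    (hy : (1 + w) * y = 1) (a m : ℕ) :
    coeff m (y ^ (a + 1)) =
      ∑ k ∈ range (m + 1), (-1) ^ k * ((a + k).choose a : R) * coeff m (w ^ k) := by
  have hs : HasSubst (-w) := HasSubst.of_constantCoeff_zero' (by simp [hw])
  set B : R⟦X⟧ := mk fun k => ((a + k).choose a : R)
  have hB : subst (-w) B * (1 + w) ^ (a + 1) = 1 := by
    have := congrArg (substAlgHom (R := R) hs) (invOneSubPow R (a + 1)).val_inv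
    rwa [map_mul, map_one, show (invOneSubPow R (a + 1)).inv = (1 - X) ^ (a + 1) from rfl,
      map_pow, map_sub, map_one, substAlgHom_X, sub_neg_eq_add, coe_substAlgHom] at this
  have hyB : y ^ (a + 1) = subst (-w) B := by
    calc y ^ (a + 1) = (subst (-w) B * (1 + w) ^ (a + 1)) * y ^ (a + 1) := by rw [hB, one_mul]
      _ = subst (-w) B := by rw [mul_assoc, ← mul_pow, hy, one_pow, mul_one]
  rw [hyB, coeff_subst' hs, finsum_eq_sum_of_support_subset (s := range (m + 1))]
  · refine sum_congr rfl fun k _ => ?_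
    rw [coeff_mk, neg_pow, show (-1 : R⟦X⟧) ^ k = C ((-1) ^ k) by simp, coeff_C_mul, smul_eq_mul]
    ring
  · intro k hk
    by_contra hkm
    refine hk ?_
    dsimp only
    rw [coeff_pow_eq_zero_of_lt (by simp [hw]) (by simpa using hkm), smul_zero]

lemma coeff_pow_eq_sum_piAntidiag {w : R⟦X⟧} (hw : constantCoeff w = 0) (N k : ℕ) :
    coeff N (w ^ k) =
      ∑ g ∈ (piAntidiag (univ : Finset (Fin N)) k).filter
          (fun g => ∑ i, (i.1 + 1) * g i = N),
        (Nat.multinomial univ g : R) * ∏ i, coeff (i.1 + 1) w ^ g i := by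
  set T : R⟦X⟧ := ∑ i : Fin N, C (coeff (i.1 + 1) w) * X ^ (i.1 + 1)
  have hT : X ^ (N + 1) ∣ w - T := by
    refine X_pow_dvd_iff.mpr fun j hj => ?_
    rw [map_sub, sub_eq_zero, map_sum]
    simp only [coeff_C_mul_X_pow]
    rcases j with _ | j
    · simp [hw]
    · simp only [Nat.add_right_cancel_iff]
      rw [Fin.sum_univ_eq_sum_range (fun i => if j = i then coeff (i + 1) w else 0), sum_ite_eq,
        if_pos (mem_range.mpr (by omega))]
  have htrunc : coeff N (w ^ k) = coeff N (T ^ k) := by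
    have := X_pow_dvd_iff.mp (hT.trans (sub_dvd_pow_sub_pow w T k)) N (by omega)
    rwa [map_sub, sub_eq_zero] at this
  have hprod : ∀ g : Fin N → ℕ, ∏ i, (C (coeff (i.1 + 1) w) * X ^ (i.1 + 1)) ^ g i =
      C (∏ i, coeff (i.1 + 1) w ^ g i) * X ^ (∑ i, (i.1 + 1) * g i) := by
    intro g
    rw [map_prod, ← prod_pow_eq_pow_sum, ← prod_mul_distrib]
    exact prod_congr rfl fun i _ => by rw [mul_pow, map_pow, ← pow_mul]
  rw [htrunc, sum_pow_eq_sum_piAntidiag, map_sum, sum_filter]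
  refine sum_congr rfl fun g _ => ?_
  rw [hprod, ← map_natCast C, ← mul_assoc, ← map_mul, coeff_C_mul_X_pow]
  exact if_congr eq_comm rfl rfl

variable [Algebra ℚ R]

lemma isUnit_natCast_succ (q : ℕ) : IsUnit ((q + 1 : ℕ) : R) := by
  simpa using (Nat.cast_add_one_ne_zero (R := ℚ) q).isUnit.map (algebraMap ℚ R)

lemma coeff_inv_pow_succ_mul_derivative_X_mul {u v : R⟦X⟧} (huv : u * v = 1) (p : ℕ) :
    coeff p (v ^ (p + 1) * d⁄dX R (X * u)) = if p = 0 then 1 else 0 := by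
  have hexpand : v ^ (p + 1) * d⁄dX R (X * u) = v ^ p + X * (v ^ (p + 1) * d⁄dX R u) := by
    rw [Derivation.leibniz, derivative_X, smul_eq_mul, smul_eq_mul]
    linear_combination v ^ p * huv
  rw [hexpand, map_add]
  rcases p with _ | q
  · simp
  · have hderiv : d⁄dX R (v ^ (q + 1)) = -((q + 1 : ℕ) * (v ^ (q + 2) * d⁄dX R u)) := by
      rw [derivative_pow, derivative_eq_of_mul_eq_one huv]
      push_cast
      ring
    have hcoeff := coeff_derivative (v ^ (q + 1)) q
    rw [hderiv, map_neg, ← map_natCast (C (R := R)), coeff_C_mul] at hcoeff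
    rw [coeff_succ_X_mul, if_neg (Nat.succ_ne_zero q)]
    refine (isUnit_natCast_succ (R := R) q).mul_right_eq_zero.mp ?_
    push_cast at hcoeff ⊢
    linear_combination -hcoeff

theorem lagrange_inversion {g u v : R⟦X⟧} (huv : u * v = 1) (hg : psComp g (X * u) = X)
    (m : ℕ) : ((m + 1 : ℕ) : R) * coeff (m + 1) g = coeff m (v ^ (m + 1)) := by
  set P := ∑ j ∈ range (m + 2), C (coeff j g) * (X * u) ^ j
  have hP : X ^ (m + 2) ∣ P - X := by
    have := X_pow_dvd_psComp_sub_sum (h := X * u) (by simp) g (m + 1)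
    rwa [hg, ← dvd_neg, neg_sub] at this
  have hvanish : X ^ (m + 1) ∣ d⁄dX R (P - X) * v ^ (m + 1) :=
    dvd_mul_of_dvd_left (X_pow_dvd_derivative hP) _
  have hterm : ∀ i ∈ range (m + 1),
      coeff m (d⁄dX R (C (coeff (i + 1) g) * (X * u) ^ (i + 1)) * v ^ (m + 1)) =
        if i = m then ((m + 1 : ℕ) : R) * coeff (m + 1) g else 0 := by
    intro i hi
    have him : i ≤ m := Nat.lt_succ_iff.mp (mem_range.mp hi)
    have hcancel : (X * u) ^ i * v ^ (m + 1) = X ^ i * v ^ (m - i + 1) := by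
      rw [show m + 1 = i + (m - i + 1) by omega, pow_add, mul_pow, ← mul_assoc,
        mul_assoc (X ^ i), ← mul_pow, huv, one_pow, mul_one]
    have hrw : d⁄dX R (C (coeff (i + 1) g) * (X * u) ^ (i + 1)) * v ^ (m + 1) =
        C (coeff (i + 1) g * (i + 1 : ℕ)) * (X ^ i * (v ^ (m - i + 1) * d⁄dX R (X * u))) := by
      rw [Derivation.leibniz, derivative_C, smul_zero, add_zero, smul_eq_mul, derivative_pow,
        Nat.add_sub_cancel, map_mul C, map_natCast C]
      linear_combination (C (coeff (i + 1) g) * ((i + 1 : ℕ) : R⟦X⟧) * d⁄dX R (X * u)) * hcancel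
    rw [hrw, coeff_C_mul, coeff_X_pow_mul', if_pos him,
      coeff_inv_pow_succ_mul_derivative_X_mul huv]
    by_cases h : i = m
    · subst h; simp [mul_comm]
    · rw [if_neg (by omega), if_neg h, mul_zero]
  calc ((m + 1 : ℕ) : R) * coeff (m + 1) g = coeff m (d⁄dX R P * v ^ (m + 1)) := by
        rw [map_sum, sum_mul, map_sum, sum_range_succ', sum_congr rfl hterm, sum_ite_eq',
          if_pos (self_mem_range_succ m)]
        simp
    _ = coeff m (v ^ (m + 1)) := by
        rw [map_sub, derivative_X, sub_mul, one_mul, X_pow_dvd_iff] at hvanish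
        simpa [sub_eq_zero] using hvanish m (by omega)

theorem factorial_mul_coeff_succ_eq_sum {f h : R⟦X⟧} (hh : constantCoeff h = 0)
    (hu : IsUnit (coeff 1 h)) (hf : psComp f h = X) (N : ℕ) :
    ((N + 1).factorial : R) * coeff (N + 1) f =
      (N.factorial : R) * (↑hu.unit⁻¹ : R) ^ (N + 1) *
        ∑ k ∈ range (N + 1), (-1) ^ k * ((N + k).choose N : R) *
          ∑ g ∈ (piAntidiag (univ : Finset (Fin N)) k).filter
              (fun g => ∑ i, (i.1 + 1) * g i = N),
            (Nat.multinomial univ g : R) * ∏ i, ((↑hu.unit⁻¹ : R) * coeff (i.1 + 2) h) ^ g i := by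
  set e : R := ↑hu.unit⁻¹
  set u : R⟦X⟧ := mk fun p => coeff (p + 1) h
  have hXu : X * u = h := by simpa [hh] using (eq_X_mul_shift_add_const h).symm
  set w : R⟦X⟧ := C e * u - 1
  have hw : constantCoeff w = 0 := by simp [w, u, e]
  set y : R⟦X⟧ := invOfUnit (1 + w) 1
  have hy : (1 + w) * y = 1 := mul_invOfUnit _ _ (by simp [hw])
  have huv : u * (C e * y) = 1 := by rw [← hy]; ring
  have hcoeff_w : ∀ i : Fin N, coeff (i.1 + 1) w = e * coeff (i.1 + 2) h := by
    intro i
    simp [w, u, coeff_one]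
  calc ((N + 1).factorial : R) * coeff (N + 1) f
      = N.factorial * (((N + 1 : ℕ) : R) * coeff (N + 1) f) := by
        rw [Nat.factorial_succ, Nat.cast_mul]; ring
    _ = N.factorial * (e ^ (N + 1) * coeff N (y ^ (N + 1))) := by
        rw [lagrange_inversion huv (hXu ▸ hf), mul_pow, ← map_pow, coeff_C_mul]
    _ = _ := by
        rw [coeff_pow_succ_of_one_add_mul_eq_one hw hy]
        simp only [coeff_pow_eq_sum_piAntidiag hw, hcoeff_w, mul_assoc]

end PowerSeries

lemma sum_range_sum_piAntidiag_eq_sum_cons {M : Type*} [AddCommMonoid M] (N : ℕ)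
    (f : ℕ → (Fin N → ℕ) → M) :
    ∑ k ∈ range (N + 1), ∑ g ∈ (piAntidiag (univ : Finset (Fin N)) k).filter
        (fun g => ∑ i, (i.1 + 1) * g i = N), f k g =
      ∑ r ∈ (Fintype.piFinset fun _ : Fin (N + 1) => range (2 * N + 2)).filter
          (fun r => ∑ i, r i = N ∧ ∑ i, (i.1 + 1) * r i = 2 * N),
        f (N - r 0) (Fin.tail r) := by
  have hweight : ∀ r : Fin (N + 1) → ℕ, ∑ i, (i.1 + 1) * r i =
      r 0 + ∑ i, (i.1 + 1) * Fin.tail r i + ∑ i, Fin.tail r i := by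
    intro r
    rw [Fin.sum_univ_succ, add_assoc, ← sum_add_distrib]
    simp only [Fin.val_zero, Fin.val_succ, Fin.tail]
    ring_nf
  rw [sum_sigma']
  refine sum_nbij' (fun x => Fin.cons (N - x.1) x.2) (fun r => ⟨N - r 0, Fin.tail r⟩)
    ?_ ?_ ?_ ?_ ?_
  · rintro ⟨k, g⟩ hx
    simp only [mem_sigma, mem_range, mem_filter, mem_piAntidiag, mem_univ, implies_true,
      and_true] at hx
    obtain ⟨hk, hsum : ∑ i, g i = k, hweight_g⟩ := hx
    have hsum_cons : ∑ i, (Fin.cons (N - k) g : Fin (N + 1) → ℕ) i = N := by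
      rw [Fin.sum_univ_succ]
      simp only [Fin.cons_zero, Fin.cons_succ]
      omega
    simp only [mem_filter, Fintype.mem_piFinset, mem_range]
    refine ⟨fun i => ?_, hsum_cons, ?_⟩
    · have := single_le_sum (fun j _ => Nat.zero_le _) (mem_univ i) (f := fun j =>
        (Fin.cons (N - k) g : Fin (N + 1) → ℕ) j)
      omega
    · rw [hweight]
      simp only [Fin.cons_zero, Fin.tail_cons]
      omega
  · intro r hr
    simp only [mem_filter, Fintype.mem_piFinset, mem_range] at hr
    obtain ⟨-, hsum, hw⟩ := hr
    rw [Fin.sum_univ_succ] at hsum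
    rw [hweight] at hw
    simp only [mem_sigma, mem_range, mem_filter, mem_piAntidiag, mem_univ, implies_true, and_true]
    simp only [Fin.tail] at hw ⊢
    exact ⟨by omega, show ∑ i : Fin N, r i.succ = N - r 0 by omega, by omega⟩
  · rintro ⟨k, g⟩ hx
    simp only [mem_sigma, mem_range] at hx
    simp only [Fin.cons_zero, Fin.tail_cons, Sigma.mk.injEq, heq_eq_eq, and_true]
    omega
  · intro r hr
    have hr0 : r 0 ≤ N := by
      have := single_le_sum (f := r) (fun j _ => Nat.zero_le _) (mem_univ 0)
      have := (mem_filter.mp hr).2.1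
      omega
    simp only [Nat.sub_sub_self hr0, Fin.cons_self_tail]
  · rintro ⟨k, g⟩ hx
    simp only [mem_sigma, mem_range] at hx
    simp only [Fin.cons_zero, Nat.sub_sub_self (Nat.lt_succ_iff.mp hx.1), Fin.tail_cons]

lemma factorial_mul_choose_mul_multinomial {ι : Type*} (s : Finset ι) (g : ι → ℕ) (N : ℕ) :
    N.factorial * (N + ∑ i ∈ s, g i).choose N * Nat.multinomial s g * ∏ i ∈ s, (g i).factorial =
      (N + ∑ i ∈ s, g i).factorial := by
  rw [Nat.choose_symm_add, ← Nat.add_choose_mul_factorial_mul_factorial N,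
    ← Nat.multinomial_spec s g]
  ring

lemma firstEntry_eq_apply_zero {N : ℕ} (r : Fin (N + 1) → ℕ) : firstEntry r = r 0 :=
  dif_pos N.succ_pos

lemma lagrange_summand_eq {R : Type*} [CommRing R] [Algebra ℚ R] (x : ℕ → R) {e : R}
    (he : e * x 1 = 1) {N : ℕ} (r : Fin (N + 1) → ℕ) (hr : ∑ i, r i = N) :
    (N.factorial : R) * e ^ (N + 1) * ((-1) ^ (N - r 0) * ((N + (N - r 0)).choose N : R) *
      ((Nat.multinomial univ (Fin.tail r) : R) * ∏ i, (e * x (i.1 + 2)) ^ Fin.tail r i)) =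
    e ^ (2 * N + 1) * (algebraMap ℚ R ((-1 : ℚ) ^ (N - r 0) * ((2 * N - r 0).factorial : ℚ) /
        ∏ i : Fin (N + 1), if i.1 = 0 then 1 else
          ((r i).factorial * ((i.1 + 1).factorial : ℚ) ^ (r i))) *
      ∏ i : Fin (N + 1), (((i.1 + 1).factorial : R) * x (i.1 + 1)) ^ (r i)) := by
  set g := Fin.tail r
  set k := N - r 0
  have hsum : ∑ i, r i = r 0 + ∑ i, g i := Fin.sum_univ_succ r
  have hk : ∑ i, g i = k := by omega
  have hr0 : r 0 = N - k := by omega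
  have hcount : (N.factorial * (N + k).choose N * Nat.multinomial univ g : ℚ) =
      (N + k).factorial / ∏ i, ((g i).factorial : ℚ) := by
    rw [eq_div_iff (prod_ne_zero_iff.mpr fun i _ => by positivity), ← hk]
    exact_mod_cast factorial_mul_choose_mul_multinomial univ g N
  set A := ∏ i, ((g i).factorial : ℚ)
  set B := ∏ i : Fin N, ((i.1 + 2).factorial : ℚ) ^ g i
  set P := ∏ i, x (i.1 + 2) ^ g i
  have hden : (∏ i : Fin (N + 1), if i.1 = 0 then (1 : ℚ) else
      ((r i).factorial * ((i.1 + 1).factorial : ℚ) ^ (r i))) = A * B := by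
    rw [Fin.prod_univ_succ, ← prod_mul_distrib]
    simp [g, Fin.tail]
  have hnum : ∏ i : Fin (N + 1), (((i.1 + 1).factorial : R) * x (i.1 + 1)) ^ (r i) =
      x 1 ^ (N - k) * (algebraMap ℚ R B * P) := by
    rw [Fin.prod_univ_succ, map_prod, ← prod_mul_distrib, hr0]
    simp [g, Fin.tail, mul_pow]
  have hepow : ∏ i, (e * x (i.1 + 2)) ^ g i = e ^ k * P := by
    rw [← hk, ← prod_pow_eq_pow_sum, ← prod_mul_distrib]
    exact prod_congr rfl fun i _ => mul_pow _ _ _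
  have hpow : e ^ (2 * N + 1) * x 1 ^ (N - k) = e ^ (N + 1) * e ^ k := by
    rw [show 2 * N + 1 = (N + 1 + k) + (N - k) by omega, pow_add, mul_assoc, ← mul_pow, he,
      one_pow, mul_one, pow_add]
  have hscalar : algebraMap ℚ R ((-1) ^ k * ((N + k).factorial : ℚ) / (A * B)) *
      algebraMap ℚ R B = (-1) ^ k * ((N.factorial * (N + k).choose N *
        Nat.multinomial univ g : ℕ) : R) := by
    have hB : B ≠ 0 := prod_ne_zero_iff.mpr fun i _ => by positivity
    rw [← map_mul, div_mul_eq_mul_div, mul_div_mul_right _ _ hB, mul_div_assoc, ← hcount]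
    simp
  rw [hnum, hden, hepow, show 2 * N - r 0 = N + k by omega]
  push_cast at hscalar ⊢
  linear_combination (-(algebraMap ℚ R ((-1) ^ k * ((N + k).factorial : ℚ) / (A * B)) *
    algebraMap ℚ R B * P)) * hpow + (-(e ^ (N + 1) * e ^ k * P)) * hscalar

theorem statement3_general {R : Type*} [CommRing R] [Algebra ℚ R] (h hbar : PowerSeries R)
    (hh0 : PowerSeries.constantCoeff h = 0)
    (hu : IsUnit (PowerSeries.coeff 1 h))
    (hinv2 : psComp hbar h = PowerSeries.X)
    (n : ℕ) (hn : 1 ≤ n) :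
    (n.factorial : R) * PowerSeries.coeff n hbar =
      (↑hu.unit⁻¹ : R) ^ (2 * n - 1) *
        ∑ r ∈ Finset.filter
            (fun r : Fin n → ℕ => (∑ i, r i) = n - 1 ∧ (∑ i, (i.1 + 1) * r i) = 2 * n - 2)
            (Fintype.piFinset fun _ : Fin n => Finset.range (2 * n)),
          algebraMap ℚ R ((-1 : ℚ) ^ (n - 1 - firstEntry r) *
              ((2 * n - 2 - firstEntry r).factorial : ℚ) /
              ∏ i : Fin n, if i.1 = 0 then 1 else
                ((r i).factorial * ((i.1 + 1).factorial : ℚ) ^ (r i))) *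
            ∏ i : Fin n,
              (((i.1 + 1).factorial : R) * PowerSeries.coeff (i.1 + 1) h) ^ (r i) := by
  obtain ⟨N, rfl⟩ : ∃ N, n = N + 1 := ⟨n - 1, by omega⟩
  rw [factorial_mul_coeff_succ_eq_sum hh0 hu hinv2 N]
  simp only [mul_sum]
  rw [sum_range_sum_piAntidiag_eq_sum_cons]
  simp only [Nat.add_sub_cancel, show 2 * (N + 1) = 2 * N + 2 by ring,
    show 2 * N + 2 - 1 = 2 * N + 1 by omega, firstEntry_eq_apply_zero]
  exact sum_congr rfl fun r hr =>
    lagrange_summand_eq (fun j => coeff j h) hu.val_inv_mul r (mem_filter.mp hr).2.1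

theorem statement3 {R : Type*} [CommRing R] [Algebra ℚ R] (h hbar : PowerSeries R)
    (hh0 : PowerSeries.constantCoeff h = 0)
    (hu : IsUnit (PowerSeries.coeff 1 h))
    (hb0 : PowerSeries.constantCoeff hbar = 0)
    (hinv1 : psComp h hbar = PowerSeries.X) (hinv2 : psComp hbar h = PowerSeries.X)
    (n : ℕ) (hn : 1 ≤ n) :
    (n.factorial : R) * PowerSeries.coeff n hbar =
      (↑hu.unit⁻¹ : R) ^ (2 * n - 1) *
        ∑ r ∈ Finset.filter
            (fun r : Fin n → ℕ => (∑ i, r i) = n - 1 ∧ (∑ i, (i.1 + 1) * r i) = 2 * n - 2)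
            (Fintype.piFinset fun _ : Fin n => Finset.range (2 * n)),
          algebraMap ℚ R ((-1 : ℚ) ^ (n - 1 - firstEntry r) *
              ((2 * n - 2 - firstEntry r).factorial : ℚ) /
              ∏ i : Fin n, if i.1 = 0 then 1 else
                ((r i).factorial * ((i.1 + 1).factorial : ℚ) ^ (r i))) *
            ∏ i : Fin n,
              (((i.1 + 1).factorial : R) * PowerSeries.coeff (i.1 + 1) h) ^ (r i) :=
  statement3_general h hbar hh0 hu hinv2 n hn
end

section
/- Let R be a commutative ℚ-algebra and let φ ∈ R[[x]] be a formal power series with zero constant term. Write φ_j = j!·(coefficient of x^j in φ). Then for all integers n ≥ k ≥ 0, n!·[x^n](φ^k/k!) = B_{n,k}(φ_1, φ_2, …, φ_{n−k+1}), where B_{n,k}(x_1, …, x_{n−k+1}) = Σ n!/(r_1! ⋯ r_n! (1!)^{r_1} ⋯ (n!)^{r_n}) · x_1^{r_1} ⋯ x_n^{r_n}, the sum running over all tuples (r_1, …, r_n) of nonnegative integers with r_1 + ⋯ + r_n = k and r_1 + 2r_2 + ⋯ + n·r_n = n. -/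
/-!
Only `φ_1, …, φ_n` enter `[x^n] φ^k`, so `φ` may be replaced by the polynomial
`Σ_{j=1}^n (φ_j / j!) x^j`. The multinomial theorem expands its `k`-th power over exponent vectors
`r` with `Σ r_j = k`, and `[x^n]` keeps those with `Σ j r_j = n`. Since
`multinomial(r) / k! = 1 / ∏ r_j!`, each surviving term is the corresponding term of `B_{n,k}`.
-/

open PowerSeries

theorem Nat.cast_multinomial_div_factorial_sum {ι K : Type*} [Field K] [CharZero K]
    (s : Finset ι) (r : ι → ℕ) :
    (Nat.multinomial s r : K) / (∑ i ∈ s, r i).factorial = (∏ i ∈ s, ((r i).factorial : K))⁻¹ := by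
  rw [← Nat.multinomial_spec, Nat.cast_mul, Nat.cast_prod, mul_comm, ← div_div,
    div_self (Nat.cast_ne_zero.mpr (Nat.multinomial_pos s r).ne'), one_div]

namespace PowerSeries

variable {R : Type*} [CommSemiring R]

theorem coeff_pow_eq_of_coeff_eq {f g : R⟦X⟧} {n : ℕ} (h : ∀ m ≤ n, coeff m f = coeff m g)
    (k : ℕ) : coeff n (f ^ k) = coeff n (g ^ k) := by
  have htrunc : trunc (n + 1) f = trunc (n + 1) g := by
    ext m
    rw [coeff_trunc, coeff_trunc]
    split_ifs with hm
    · exact h m (Nat.lt_succ_iff.mp hm)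
    · rfl
  rw [← coeff_coe_trunc_of_lt (Nat.lt_succ_self n), ← trunc_trunc_pow, htrunc, trunc_trunc_pow,
    coeff_coe_trunc_of_lt (Nat.lt_succ_self n)]

theorem coeff_eq_coeff_sum_fin_of_constantCoeff_eq_zero {φ : R⟦X⟧} (hφ : constantCoeff φ = 0)
    {m n : ℕ} (hm : m ≤ n) :
    coeff m φ = coeff m (∑ i : Fin n, C (coeff (i.1 + 1) φ) * X ^ (i.1 + 1)) := by
  rw [Fin.sum_univ_eq_sum_range (fun i => C (coeff (i + 1) φ) * X ^ (i + 1)), map_sum]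
  simp only [coeff_C_mul_X_pow]
  rcases m with _ | j
  · simpa using hφ
  · simp only [Nat.add_right_cancel_iff, Finset.sum_ite_eq, Finset.mem_range]
    rw [if_pos (by omega)]

theorem coeff_sum_C_mul_X_pow_pow {ι : Type*} [DecidableEq ι] (s : Finset ι) (a : ι → R)
    (w : ι → ℕ) (k n : ℕ) :
    coeff n ((∑ i ∈ s, C (a i) * X ^ w i) ^ k) =
      ∑ r ∈ (Finset.piAntidiag s k).filter (fun r => ∑ i ∈ s, w i * r i = n),
        Nat.multinomial s r * ∏ i ∈ s, a i ^ r i := by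
  rw [Finset.sum_pow_eq_sum_piAntidiag, map_sum, Finset.sum_filter]
  refine Finset.sum_congr rfl fun r _ => ?_
  have hmonomial : ∏ i ∈ s, (C (a i) * X ^ w i) ^ r i =
      C (∏ i ∈ s, a i ^ r i) * X ^ (∑ i ∈ s, w i * r i) := by
    rw [map_prod, ← Finset.prod_pow_eq_pow_sum, ← Finset.prod_mul_distrib]
    refine Finset.prod_congr rfl fun i _ => ?_
    rw [mul_pow, map_pow, pow_mul]
  rw [hmonomial, ← map_natCast (C (R := R)), ← mul_assoc, ← map_mul, coeff_C_mul_X_pow]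
  exact if_congr eq_comm rfl rfl

end PowerSeries

theorem filter_piAntidiag_univ_fin_eq (n k : ℕ) :
    (Finset.piAntidiag (Finset.univ : Finset (Fin n)) k).filter
        (fun r => ∑ i, (i.1 + 1) * r i = n) =
      (Fintype.piFinset fun _ : Fin n => Finset.range (n + 1)).filter
        (fun r => (∑ i, r i) = k ∧ (∑ i, (i.1 + 1) * r i) = n) := by
  ext r
  simp only [Finset.mem_filter, Finset.mem_piAntidiag, Fintype.mem_piFinset, Finset.mem_range,
    Finset.mem_univ, implies_true, and_true]
  refine ⟨fun ⟨hk, hn⟩ => ⟨fun i => ?_, hk, hn⟩, fun ⟨_, hk, hn⟩ => ⟨hk, hn⟩⟩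
  calc r i ≤ (i.1 + 1) * r i := Nat.le_mul_of_pos_left _ i.1.succ_pos
    _ ≤ ∑ j, (j.1 + 1) * r j :=
        Finset.single_le_sum (f := fun j : Fin n => (j.1 + 1) * r j) (fun _ _ => Nat.zero_le _)
          (Finset.mem_univ i)
    _ < n + 1 := by omega

theorem multinomial_term_eq_bell_term {ι R : Type*} [CommSemiring R] [Algebra ℚ R]
    (s : Finset ι) (r c : ι → ℕ) (hc : ∀ i ∈ s, c i ≠ 0) (a : ι → R) (N : ℕ) :
    (N : R) * (algebraMap ℚ R ((∑ i ∈ s, r i).factorial : ℚ)⁻¹ *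
        (Nat.multinomial s r * ∏ i ∈ s, a i ^ r i)) =
      algebraMap ℚ R (N / ∏ i ∈ s, ((r i).factorial * (c i : ℚ) ^ r i)) *
        ∏ i ∈ s, ((c i : R) * a i) ^ r i := by
  have hc_pow : ∏ i ∈ s, (c i : ℚ) ^ r i ≠ 0 :=
    Finset.prod_ne_zero_iff.mpr fun i hi => pow_ne_zero _ (Nat.cast_ne_zero.mpr (hc i hi))
  have hq : (N : ℚ) * ((∑ i ∈ s, r i).factorial : ℚ)⁻¹ * Nat.multinomial s r =
      (N / ∏ i ∈ s, ((r i).factorial * (c i : ℚ) ^ r i)) * ∏ i ∈ s, (c i : ℚ) ^ r i := by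
    rw [mul_assoc, mul_comm _ (Nat.multinomial s r : ℚ), ← div_eq_mul_inv,
      Nat.cast_multinomial_div_factorial_sum, Finset.prod_mul_distrib]
    field_simp
  have hprod : ∏ i ∈ s, ((c i : R) * a i) ^ r i =
      algebraMap ℚ R (∏ i ∈ s, (c i : ℚ) ^ r i) * ∏ i ∈ s, a i ^ r i := by
    simp only [mul_pow, Finset.prod_mul_distrib, map_prod, map_pow, map_natCast]
  rw [hprod]
  conv_rhs => rw [← mul_assoc, ← map_mul, ← hq]
  simp only [map_mul, map_natCast]
  ring

theorem statement4_general {R : Type*} [CommRing R] [Algebra ℚ R] (φ : PowerSeries R)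
    (hφ0 : PowerSeries.constantCoeff φ = 0) (n k : ℕ) :
    (n.factorial : R) * PowerSeries.coeff n
        (PowerSeries.C (algebraMap ℚ R ((k.factorial : ℚ)⁻¹)) * φ ^ k) =
      bellPoly n k (fun j => (j.factorial : R) * PowerSeries.coeff j φ) := by
  have hpow : coeff n (φ ^ k) =
      ∑ r ∈ (Fintype.piFinset fun _ : Fin n => Finset.range (n + 1)).filter
          (fun r => (∑ i, r i) = k ∧ (∑ i, (i.1 + 1) * r i) = n),
        Nat.multinomial Finset.univ r * ∏ i, coeff (i.1 + 1) φ ^ r i := by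
    rw [coeff_pow_eq_of_coeff_eq
        (fun m hm => coeff_eq_coeff_sum_fin_of_constantCoeff_eq_zero hφ0 hm),
      coeff_sum_C_mul_X_pow_pow, filter_piAntidiag_univ_fin_eq]
  rw [coeff_C_mul, hpow, bellPoly, Finset.mul_sum, Finset.mul_sum]
  refine Finset.sum_congr rfl fun r hr => ?_
  obtain ⟨-, hk, -⟩ := Finset.mem_filter.mp hr
  rw [← hk]
  exact multinomial_term_eq_bell_term _ r (fun i => (i.1 + 1).factorial)
    (fun i _ => Nat.factorial_ne_zero _) _ n.factorial

theorem statement4 {R : Type*} [CommRing R] [Algebra ℚ R] (φ : PowerSeries R)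
    (hφ0 : PowerSeries.constantCoeff φ = 0) (n k : ℕ) (hkn : k ≤ n) :
    (n.factorial : R) * PowerSeries.coeff n
        (PowerSeries.C (algebraMap ℚ R ((k.factorial : ℚ)⁻¹)) * φ ^ k) =
      bellPoly n k (fun j => (j.factorial : R) * PowerSeries.coeff j φ) :=
  statement4_general φ hφ0 n k
end
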